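/- Fix an integer a ≥ 2 and consider the multiway system with rule n ↦ {a·n, n + 1} started from 1. Let N(t) be the number of values that are reachable in t steps but not in fewer than t steps. Then N(0) = 1 and for every t ≥ a, N(t) = N(t−1) + N(t−2) + ⋯ + N(t−a); that is, the counts of newly generated numbers satisfy the a-term generalized Fibonacci (a-nacci) recurrence. -/

import Mathlib

/-- Values reachable from 1 in exactly `t` steps of the multiway system `n ↦ {a*n, n + 1}`. -/
def ReachIn (a : ℕ) : ℕ → Set ℕ
  | 0 => {1}
  | t + 1 => {m | ∃ k ∈ ReachIn a t, m = a * k ∨ m = k + 1}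

/-- The number of values reachable in exactly `t` steps but in no fewer steps. -/
noncomputable def NewCount (a t : ℕ) : ℕ :=
  Set.ncard (ReachIn a t \ ⋃ s ∈ Finset.range t, ReachIn a s)

namespace Anacci

/-- The "weight" of `n` in base `a`: digit sum plus number of digits. -/
def dd (a n : ℕ) : ℕ := (Nat.digits a n).sum + (Nat.digits a n).length

lemma dd_zero (a : ℕ) : dd a 0 = 0 := by simp [dd]

lemma dd_small {a : ℕ} (ha : 2 ≤ a) {n : ℕ} (h1 : 0 < n) (h2 : n < a) : dd a n = n + 1 := by
  have h : Nat.digits a n = [n] := by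
    rw [Nat.digits_def' (show 1 < a by omega) h1, Nat.mod_eq_of_lt h2,
      Nat.div_eq_of_lt h2, Nat.digits_zero]
  simp [dd, h]

lemma dd_step {a : ℕ} (ha : 2 ≤ a) {m : ℕ} (hm : 0 < m) {r : ℕ} (hr : r < a) :
    dd a (a * m + r) = dd a m + (r + 1) := by
  have hpos : 0 < a * m + r := by positivity
  have h1 : (a * m + r) % a = r := by rw [Nat.mul_add_mod, Nat.mod_eq_of_lt hr]
  have h2 : (a * m + r) / a = m := by
    rw [Nat.mul_add_div (by omega), Nat.div_eq_of_lt hr, Nat.add_zero]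
  rw [dd, Nat.digits_def' (show 1 < a by omega) hpos, h1, h2]
  simp [dd]; omega

lemma one_le_sum {a : ℕ} (ha : 2 ≤ a) : ∀ n, 0 < n → 1 ≤ (Nat.digits a n).sum := by
  intro n
  induction n using Nat.strong_induction_on with
  | _ n ih =>
    intro hn
    rw [Nat.digits_def' (show 1 < a by omega) hn]
    rcases Nat.lt_or_ge n a with h | h
    · rw [Nat.mod_eq_of_lt h]; simp; omega
    · have h0 : 0 < n / a := Nat.div_pos h (by omega)
      have := ih (n / a) (Nat.div_lt_self hn (by omega)) h0
      simp; omega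

lemma dd_two_le {a : ℕ} (ha : 2 ≤ a) {n : ℕ} (hn : 0 < n) : 2 ≤ dd a n := by
  have h1 := one_le_sum ha n hn
  have h2 : (Nat.digits a n) ≠ [] := Nat.digits_ne_nil_iff_ne_zero.2 (by omega)
  have := List.length_pos_iff.2 h2
  unfold dd; omega

lemma dd_three_le {a : ℕ} (ha : 2 ≤ a) {n : ℕ} (hn : 2 ≤ n) : 3 ≤ dd a n := by
  rcases Nat.lt_or_ge n a with h | h
  · rw [dd_small ha (by omega) h]; omega
  · have hm : 0 < n / a := Nat.div_pos h (by omega)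
    have he : n = a * (n / a) + n % a := (Nat.div_add_mod n a).symm
    have h3 : dd a n = dd a (n / a) + (n % a + 1) := by
      conv_lhs => rw [he]
      exact dd_step ha hm (Nat.mod_lt n (by omega))
    have h2 := dd_two_le ha hm
    omega

lemma dd_succ_le {a : ℕ} (ha : 2 ≤ a) : ∀ n, 0 < n → dd a (n + 1) ≤ dd a n + 1 := by
  intro n
  induction n using Nat.strong_induction_on with
  | _ n ih =>
    intro hn
    by_cases hdvd : a ∣ (n + 1)
    · obtain ⟨m, hm⟩ := hdvd
      have hm1 : 0 < m := by
        rcases Nat.eq_zero_or_pos m with h0 | h0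
        · subst h0; simp at hm
        · exact h0
      have hsucc : dd a (n + 1) = dd a m + 1 := by
        have h := dd_step (a := a) (m := m) (r := 0) ha hm1 (by omega)
        simp only [Nat.add_zero, Nat.zero_add] at h
        rw [hm, h]
      rcases Nat.lt_or_ge m 2 with h2 | h2
      · -- m = 1, n = a - 1
        have hm' : m = 1 := by omega
        rw [hm'] at hm
        have hn' : n = a - 1 := by omega
        have hd : dd a n = n + 1 := dd_small ha hn (by omega)
        have h1 : dd a 1 = 2 := dd_small ha one_pos (by omega)
        rw [hsucc, hm', h1]; omega
      · -- m ≥ 2, n = a * (m - 1) + (a - 1)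
        obtain ⟨k, rfl⟩ : ∃ k, m = k + 1 := ⟨m - 1, by omega⟩
        have hmul : a * (k + 1) = a * k + a := by ring
        have he : n = a * k + (a - 1) := by omega
        have hdn : dd a n = dd a k + a := by
          conv_lhs => rw [he]
          rw [dd_step ha (by omega) (show a - 1 < a by omega)]; omega
        have hak : 2 * k ≤ a * k := Nat.mul_le_mul_right k ha
        have hmlt : k + 1 < n := by omega
        have hihm : dd a (k + 1) ≤ dd a k + 1 := ih k (by omega) (by omega)
        omega
    · rcases Nat.lt_or_ge (n + 1) a with h | h
      · rw [dd_small ha (by omega) h, dd_small ha hn (by omega)]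
      · have hna : a ≤ n := by
          rcases Nat.eq_or_lt_of_le h with h' | h'
          · exact absurd ⟨1, by omega⟩ hdvd
          · omega
        have hm : 0 < n / a := Nat.div_pos hna (by omega)
        have hdm : n = a * (n / a) + n % a := (Nat.div_add_mod n a).symm
        have hr : n % a < a - 1 := by
          have hlt := Nat.mod_lt n (show 0 < a by omega)
          rcases Nat.lt_or_ge (n % a) (a - 1) with h'' | h''
          · exact h''
          · exfalso
            apply hdvd
            have hx : a * (n / a + 1) = a * (n / a) + a := by ring
            exact ⟨n / a + 1, by omega⟩
        have h1 : dd a n = dd a (n / a) + (n % a + 1) := by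
          conv_lhs => rw [hdm]
          exact dd_step ha hm (by omega)
        have h2 : dd a (n + 1) = dd a (n / a) + (n % a + 1 + 1) := by
          rw [show n + 1 = a * (n / a) + (n % a + 1) by omega]
          exact dd_step ha hm (by omega)
        omega

lemma dd_mul {a : ℕ} (ha : 2 ≤ a) {m : ℕ} (hm : 0 < m) : dd a (a * m) = dd a m + 1 := by
  have h := dd_step (a := a) (m := m) (r := 0) ha hm (by omega)
  simpa using h

lemma reach_dd {a : ℕ} (ha : 2 ≤ a) :
    ∀ t n, n ∈ ReachIn a t → 0 < n ∧ dd a n ≤ t + 2 := by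
  intro t
  induction t with
  | zero =>
    intro n hn
    have : n = 1 := hn
    subst this
    exact ⟨one_pos, by rw [dd_small ha one_pos (by omega)]⟩
  | succ t ih =>
    intro n hn
    obtain ⟨k, hk, hor⟩ := hn
    obtain ⟨hkpos, hkle⟩ := ih k hk
    rcases hor with rfl | rfl
    · refine ⟨by positivity, ?_⟩
      rw [dd_mul ha hkpos]; omega
    · refine ⟨by omega, ?_⟩
      have := dd_succ_le ha k hkpos
      omega

lemma dd_reach {a : ℕ} (ha : 2 ≤ a) :
    ∀ n t, dd a n = t + 2 → n ∈ ReachIn a t := by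
  intro n
  induction n using Nat.strong_induction_on with
  | _ n ih =>
    intro t h
    have hn : 0 < n := by
      rcases Nat.eq_zero_or_pos n with h0 | h0
      · subst h0; rw [dd_zero] at h; omega
      · exact h0
    rcases Nat.lt_or_ge n 2 with h1 | h1
    · have hn1 : n = 1 := by omega
      subst hn1
      have : dd a 1 = 2 := dd_small ha one_pos (by omega)
      have ht : t = 0 := by omega
      subst ht
      exact rfl
    · have h3 := dd_three_le ha h1
      obtain ⟨s, rfl⟩ : ∃ s, t = s + 1 := ⟨t - 1, by omega⟩
      by_cases hdvd : a ∣ n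
      · obtain ⟨m, rfl⟩ := hdvd
        have hm1 : 0 < m := by
          rcases Nat.eq_zero_or_pos m with h0 | h0
          · subst h0; simp at hn
          · exact h0
        have hmul := dd_mul ha hm1
        have hmlt : m < a * m := by
          have : 2 * m ≤ a * m := Nat.mul_le_mul_right m ha
          omega
        have hmem : m ∈ ReachIn a s := ih m hmlt s (by omega)
        exact ⟨m, hmem, Or.inl rfl⟩
      · have hr : 0 < n % a := by
          rcases Nat.eq_zero_or_pos (n % a) with h0 | h0
          · exact absurd (Nat.dvd_of_mod_eq_zero h0) hdvd
          · exact h0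
        have hprev : dd a (n - 1) + 1 = dd a n := by
          rcases Nat.lt_or_ge n a with hlt | hge
          · rw [dd_small ha hn hlt, dd_small ha (by omega) (by omega)]
            omega
          · have hm : 0 < n / a := Nat.div_pos hge (by omega)
            have hdm : n = a * (n / a) + n % a := (Nat.div_add_mod n a).symm
            have hmod := Nat.mod_lt n (show 0 < a by omega)
            have e1 : dd a n = dd a (n / a) + (n % a + 1) := by
              conv_lhs => rw [hdm]
              exact dd_step ha hm hmod
            have e2 : dd a (n - 1) = dd a (n / a) + (n % a - 1 + 1) := by
              rw [show n - 1 = a * (n / a) + (n % a - 1) by omega]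
              exact dd_step ha hm (by omega)
            omega
        have hmem : n - 1 ∈ ReachIn a s := ih (n - 1) (by omega) s (by omega)
        exact ⟨n - 1, hmem, Or.inr (by omega)⟩

lemma newSet_eq {a : ℕ} (ha : 2 ≤ a) (t : ℕ) :
    ReachIn a t \ ⋃ s ∈ Finset.range t, ReachIn a s = {n | dd a n = t + 2} := by
  ext n
  simp only [Set.mem_diff, Set.mem_iUnion, Set.mem_setOf_eq, Finset.mem_range, exists_prop,
    not_exists, not_and]
  constructor
  · rintro ⟨h1, h2⟩
    obtain ⟨hpos, hle⟩ := reach_dd ha t n h1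
    by_contra hne
    have hlt : dd a n < t + 2 := lt_of_le_of_ne hle hne
    have h2le := dd_two_le ha hpos
    obtain ⟨s, hs⟩ : ∃ s, dd a n = s + 2 := ⟨dd a n - 2, by omega⟩
    exact h2 s (by omega) (dd_reach ha n s hs)
  · intro h
    refine ⟨dd_reach ha n t h, ?_⟩
    intro s hs hmem
    have := (reach_dd ha s n hmem).2
    omega

/-- The finset of numbers of weight `T`. -/
def F (a T : ℕ) : Finset ℕ := (Finset.range (a ^ T)).filter (fun n => dd a n = T)

lemma mem_F {a : ℕ} (ha : 2 ≤ a) {T n : ℕ} : n ∈ F a T ↔ dd a n = T := by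
  constructor
  · intro h; exact (Finset.mem_filter.1 h).2
  · intro h
    refine Finset.mem_filter.2 ⟨Finset.mem_range.2 ?_, h⟩
    have hlen : (Nat.digits a n).length ≤ T := by
      have : (Nat.digits a n).length ≤ dd a n := by unfold dd; omega
      omega
    calc n < a ^ (Nat.digits a n).length := Nat.lt_base_pow_length_digits (by omega)
      _ ≤ a ^ T := Nat.pow_le_pow_right (by omega) hlen

lemma newCount_eq {a : ℕ} (ha : 2 ≤ a) (t : ℕ) : NewCount a t = (F a (t + 2)).card := by
  rw [NewCount, newSet_eq ha]
  rw [show {n | dd a n = t + 2} = ((F a (t + 2) : Finset ℕ) : Set ℕ) by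
    ext n; simp [mem_F ha]]
  exact Set.ncard_coe_finset _

lemma F_card {a : ℕ} (ha : 2 ≤ a) {T : ℕ} (hT : a + 2 ≤ T) :
    (F a T).card = ∑ i ∈ Finset.Icc 1 a, (F a (T - i)).card := by
  have key : F a T = (Finset.Icc 1 a).biUnion
      (fun i => (F a (T - i)).image (fun m => a * m + (i - 1))) := by
    ext n
    simp only [mem_F ha, Finset.mem_biUnion, Finset.mem_Icc, Finset.mem_image]
    constructor
    · intro h
      have hna : a ≤ n := by
        by_contra hc
        push_neg at hc
        rcases Nat.eq_zero_or_pos n with h0 | h0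
        · subst h0; rw [dd_zero] at h; omega
        · rw [dd_small ha h0 hc] at h; omega
      have hm : 0 < n / a := Nat.div_pos hna (by omega)
      have hmod := Nat.mod_lt n (show 0 < a by omega)
      have hdm : n = a * (n / a) + n % a := (Nat.div_add_mod n a).symm
      have e1 : dd a n = dd a (n / a) + (n % a + 1) := by
        conv_lhs => rw [hdm]
        exact dd_step ha hm hmod
      exact ⟨n % a + 1, ⟨by omega, by omega⟩, n / a, by omega, by omega⟩
    · rintro ⟨i, ⟨hi1, hi2⟩, m, hm, rfl⟩
      have hdm : dd a m = T - i := hm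
      have hm1 : 0 < m := by
        rcases Nat.eq_zero_or_pos m with h0 | h0
        · subst h0; rw [dd_zero] at hdm; omega
        · exact h0
      rw [dd_step ha hm1 (show i - 1 < a by omega)]
      omega
  rw [key, Finset.card_biUnion]
  · refine Finset.sum_congr rfl fun i _ => ?_
    apply Finset.card_image_of_injective
    intro x y hxy
    simp only at hxy
    have : a * x = a * y := by omega
    exact Nat.eq_of_mul_eq_mul_left (by omega) this
  · intro i hi j hj hij
    simp only [Finset.mem_coe, Finset.mem_Icc] at hi hj
    rw [Function.onFun, Finset.disjoint_left]
    rintro x hx hx'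
    obtain ⟨m, _, rfl⟩ := Finset.mem_image.1 hx
    obtain ⟨m', _, he⟩ := Finset.mem_image.1 hx'
    have h1 : (a * m + (i - 1)) % a = i - 1 := by
      rw [Nat.mul_add_mod, Nat.mod_eq_of_lt (by omega)]
    have h2 : (a * m' + (j - 1)) % a = j - 1 := by
      rw [Nat.mul_add_mod, Nat.mod_eq_of_lt (by omega)]
    rw [he] at h2
    omega

end Anacci

/-- For the rule `n ↦ {a*n, n + 1}` (with `a ≥ 2`) started from 1, the counts of newly
generated numbers satisfy the `a`-term generalized Fibonacci (a-nacci) recurrence. -/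
theorem newCount_anacci (a : ℕ) (ha : 2 ≤ a) :
    NewCount a 0 = 1 ∧
      ∀ t : ℕ, a ≤ t → NewCount a t = ∑ i ∈ Finset.Icc 1 a, NewCount a (t - i) := by
  constructor
  · rw [Anacci.newCount_eq ha]
    have : Anacci.F a 2 = {1} := by
      ext n
      rw [Anacci.mem_F ha, Finset.mem_singleton]
      constructor
      · intro h
        by_contra hne
        rcases Nat.eq_zero_or_pos n with h0 | h0
        · subst h0; rw [Anacci.dd_zero] at h; omega
        · have h2 : 2 ≤ n := by omega
          have := Anacci.dd_three_le ha h2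
          omega
      · rintro rfl
        rw [Anacci.dd_small ha one_pos (by omega)]
    rw [this, Finset.card_singleton]
  · intro t ht
    rw [Anacci.newCount_eq ha, Anacci.F_card ha (by omega)]
    refine Finset.sum_congr rfl fun i hi => ?_
    simp only [Finset.mem_Icc] at hi
    rw [show t + 2 - i = (t - i) + 2 by omega, ← Anacci.newCount_eq ha]
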